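/- Let G = (V, E) be a hypergraph with a linear order < on the edge set E, let 𝒟 ⊆ 𝔅(G, <) be any subset of the set of broken cycles of G, and let f be a function assigning to each edge subset A ⊆ E an element f(G, A) of an additive abelian group, such that for all A ⊆ E and all e ∈ E \ A: if k(G[A]) = k(G[A ∪ {e}]) then f(G, A) = -f(G, A ∪ {e}). Then Σ_{A ⊆ E} f(G, A) = Σ_{A ⊆ E, B ⊄ A for all B ∈ 𝒟} f(G, A). -/

import Mathlib

open scoped Classical

/-- A hypergraph with vertex type `α` and edges indexed by elements of `ι`
(the indexing allows parallel edges, i.e. a multiset of edges). Every edge is a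
nonempty subset of the vertex set. -/
structure IdxHypergraph (α ι : Type*) where
  verts : Finset α
  edges : Finset ι
  inc : ι → Finset α
  inc_nonempty : ∀ i ∈ edges, (inc i).Nonempty
  inc_sub : ∀ i ∈ edges, inc i ⊆ verts

namespace IdxHypergraph

variable {α ι : Type*}

/-- `u` and `v` are connected via a sequence of edges from `E'` in which consecutive
edges share a vertex. -/
def Conn (inc : ι → Finset α) (E' : Finset ι) (u v : α) : Prop :=
  Relation.ReflTransGen (fun a b => ∃ i ∈ E', a ∈ inc i ∧ b ∈ inc i) u v

/-- The number of connected components of the hypergraph with vertex set `V'` and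
edge set `E'` (isolated vertices form their own components). -/
noncomputable def numComponents (inc : ι → Finset α) (V' : Finset α) (E' : Finset ι) : ℕ :=
  (V'.image fun v => V'.filter fun u => Conn inc E' u v).card

/-- `(V₁, E₁)` is a subgraph of `(V₂, E₂)` (w.r.t. the incidence function `inc`). -/
def IsSubgraph (inc : ι → Finset α) (V₁ : Finset α) (E₁ : Finset ι)
    (V₂ : Finset α) (E₂ : Finset ι) : Prop :=
  V₁ ⊆ V₂ ∧ E₁ ⊆ E₂ ∧ ∀ i ∈ E₁, inc i ⊆ V₁

/-- The hypergraph `(V', E')` is δ-cyclic: it has a subgraph with at least one edge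
such that deleting any of its edges does not change the number of connected
components. -/
def IsDeltaCyclic (inc : ι → Finset α) (V' : Finset α) (E' : Finset ι) : Prop :=
  ∃ V'' E'', IsSubgraph inc V'' E'' V' E' ∧ E''.Nonempty ∧
    ∀ i ∈ E'', numComponents inc V'' E'' = numComponents inc V'' (E''.erase i)

/-- The hypergraph `(V', E')` is a δ-cycle: it is δ-cyclic and has no proper
δ-cyclic subgraph. -/
def IsDeltaCycle (inc : ι → Finset α) (V' : Finset α) (E' : Finset ι) : Prop :=
  IsDeltaCyclic inc V' E' ∧
    ∀ V'' E'', IsSubgraph inc V'' E'' V' E' → (V'', E'') ≠ (V', E') →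
      ¬ IsDeltaCyclic inc V'' E''

/-- A proper coloring of `G` with colors in `Fin x`: no edge has all its vertices
mapped to the same color. -/
def ProperColoring (G : IdxHypergraph α ι) (x : ℕ) (φ : G.verts → Fin x) : Prop :=
  ∀ i ∈ G.edges, ¬ ∃ c : Fin x, ∀ v : G.verts, (v : α) ∈ G.inc i → φ v = c

/-- The number of proper `x`-colorings of `G`, i.e. the value `χ(G, x)` of the
chromatic polynomial. -/
noncomputable def chromaticCount (G : IdxHypergraph α ι) (x : ℕ) : ℕ :=
  Nat.card {φ : G.verts → Fin x // G.ProperColoring x φ}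

section Order

variable [LinearOrder ι]

/-- `B` is a broken cycle of `G` w.r.t. the linear order on edges: `B` arises from
deleting the maximal edge of (the edge set of) a δ-cycle that is a subgraph of `G`. -/
def IsBrokenCycle (G : IdxHypergraph α ι) (B : Finset ι) : Prop :=
  ∃ V_C E_C e, IsSubgraph G.inc V_C E_C G.verts G.edges ∧
    IsDeltaCycle G.inc V_C E_C ∧ e ∈ E_C ∧ (∀ i ∈ E_C, i ≤ e) ∧ B = E_C.erase e

/-- The edge `e` closes the broken cycle `B`: `B ∪ {e}` is the edge set of a
δ-cycle in `G`. -/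
def Closes (G : IdxHypergraph α ι) (B : Finset ι) (e : ι) : Prop :=
  ∃ V_C, IsSubgraph G.inc V_C (insert e B) G.verts G.edges ∧
    IsDeltaCycle G.inc V_C (insert e B)

/-- `e` is the minimal edge closing the broken cycle `B`, i.e. `e = e(B)`. -/
def IsMinCloser (G : IdxHypergraph α ι) (B : Finset ι) (e : ι) : Prop :=
  G.Closes B e ∧ ∀ e', G.Closes B e' → e ≤ e'

/-- `e` is the maximal edge closing the broken cycle `B`, i.e. `e = ē(B)`. -/
def IsMaxCloser (G : IdxHypergraph α ι) (B : Finset ι) (e : ι) : Prop :=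
  G.Closes B e ∧ ∀ e', G.Closes B e' → e' ≤ e

/-- `A` contains at least one broken cycle, and
`e = m(A) = min { e(B) : B ∈ 𝔅(G, <), B ⊆ A }`. -/
def IsMinClosingEdge (G : IdxHypergraph α ι) (A : Finset ι) (e : ι) : Prop :=
  (∃ B, G.IsBrokenCycle B ∧ B ⊆ A ∧ G.IsMinCloser B e) ∧
    ∀ B e', G.IsBrokenCycle B → B ⊆ A → G.IsMinCloser B e' → e ≤ e'

end Order

end IdxHypergraph

/-!
Induct on `D`. Among all edges that close a member of `D` into a δ-cycle, take the largest, `e`,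
closing `B ∈ D`. Every `B' ∈ D` lies strictly below an edge closing it, so `e` lies in no member
of `D`. Since the vertices of `e` are already connected in `B`, adding `e` to any `A ⊇ B` keeps the
number of components, so toggling `e` cancels the subsets containing `B` and avoiding `D \ {B}`
in pairs; removing `B` from `D` therefore does not change the sum.
-/

namespace Finset

variable {ι M : Type*} [DecidableEq ι] [AddCommGroup M]

lemma sum_powerset_filter_eq_zero_of_eq_neg_insert {E : Finset ι} {e : ι} (he : e ∈ E)
    {P : Finset ι → Prop} [DecidablePred P] (hP : ∀ A, e ∉ A → (P (insert e A) ↔ P A))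
    {f : Finset ι → M} (hf : ∀ A ⊆ E, e ∉ A → P A → f A = -f (insert e A)) :
    ∑ A ∈ E.powerset with P A, f A = 0 := by
  rw [sum_filter, ← insert_erase he, sum_powerset_insert (notMem_erase e E), ← sum_add_distrib]
  refine sum_eq_zero fun A hA => ?_
  have hAE : A ⊆ E.erase e := mem_powerset.mp hA
  have heA : e ∉ A := fun h => notMem_erase e E (hAE h)
  by_cases hPA : P A
  · rw [if_pos hPA, if_pos ((hP A heA).mpr hPA), hf A (hAE.trans (erase_subset e E)) heA hPA,
      neg_add_cancel]
  · rw [if_neg hPA, if_neg (mt (hP A heA).mp hPA), add_zero]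

lemma sum_filter_forall_not_subset_erase {E : Finset ι} {D : Finset (Finset ι)} {B : Finset ι}
    (hB : B ∈ D) {e : ι} (he : e ∈ E) (heD : ∀ B' ∈ D, e ∉ B') {f : Finset ι → M}
    (hf : ∀ A ⊆ E, B ⊆ A → e ∉ A → f A = -f (insert e A)) :
    ∑ A ∈ E.powerset with ∀ B' ∈ D.erase B, ¬B' ⊆ A, f A
      = ∑ A ∈ E.powerset with ∀ B' ∈ D, ¬B' ⊆ A, f A := by
  have hsubset_insert : ∀ B' ∈ D, ∀ A, B' ⊆ insert e A ↔ B' ⊆ A := fun B' hB' _ =>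
    subset_insert_iff_of_notMem (heD B' hB')
  have hcontaining : ∑ A ∈ E.powerset with (∀ B' ∈ D.erase B, ¬B' ⊆ A) ∧ B ⊆ A, f A = 0 :=
    sum_powerset_filter_eq_zero_of_eq_neg_insert he
      (fun A _ => and_congr (forall₂_congr fun B' hB' =>
        not_congr (hsubset_insert B' (mem_of_mem_erase hB') A)) (hsubset_insert B hB A))
      fun A hAE heA hPA => hf A hAE hPA.2 heA
  have havoiding : ((E.powerset.filter fun A => ∀ B' ∈ D.erase B, ¬B' ⊆ A).filter fun A => ¬B ⊆ A)
      = E.powerset.filter fun A => ∀ B' ∈ D, ¬B' ⊆ A := by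
    rw [filter_filter]
    refine filter_congr fun A _ => ⟨fun ⟨h, hBA⟩ B' hB' => ?_, fun h =>
      ⟨fun B' hB' => h B' (mem_of_mem_erase hB'), h B hB⟩⟩
    by_cases hB'B : B' = B
    · exact hB'B ▸ hBA
    · exact h B' (mem_erase.mpr ⟨hB'B, hB'⟩)
  rw [← sum_filter_add_sum_filter_not _ (fun A => B ⊆ A), filter_filter, hcontaining, zero_add,
    havoiding]

theorem sum_powerset_eq_sum_filter_forall_not_subset {E : Finset ι} (D : Finset (Finset ι))
    {f : Finset ι → M}
    (h : ∀ D' ⊆ D, D'.Nonempty → ∃ B ∈ D', ∃ e ∈ E, (∀ B' ∈ D', e ∉ B') ∧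
      ∀ A ⊆ E, B ⊆ A → e ∉ A → f A = -f (insert e A)) :
    ∑ A ∈ E.powerset, f A = ∑ A ∈ E.powerset with ∀ B ∈ D, ¬B ⊆ A, f A := by
  induction D using strongInduction with
  | H D ih =>
    rcases D.eq_empty_or_nonempty with rfl | hD
    · simp
    obtain ⟨B, hB, e, he, heD, hf⟩ := h D subset_rfl hD
    rw [← sum_filter_forall_not_subset_erase hB he heD hf]
    exact ih _ (erase_ssubset hB) fun D' hD' => h D' (hD'.trans (erase_subset B D))

end Finset

namespace IdxHypergraph

open Finset

variable {α ι : Type*} {inc : ι → Finset α}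

lemma conn_mono {E₁ E₂ : Finset ι} (hE : E₁ ⊆ E₂) {u v : α} (h : Conn inc E₁ u v) :
    Conn inc E₂ u v :=
  Relation.ReflTransGen.mono (fun _ _ ⟨i, hi, ha, hb⟩ => ⟨i, hE hi, ha, hb⟩) _ _ h

lemma conn_symm {E : Finset ι} {u v : α} (h : Conn inc E u v) : Conn inc E v u :=
  Relation.reflTransGen_swap.mp
    (Relation.ReflTransGen.mono (fun _ _ ⟨i, hi, ha, hb⟩ => ⟨i, hi, hb, ha⟩) _ _ h)

/-- Every component for `E₂` is a union of components for `E₁`; equal counts force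
these unions to be trivial. -/
lemma conn_of_numComponents_eq {V : Finset α} {E₁ E₂ : Finset ι} (hE : E₁ ⊆ E₂)
    (hk : numComponents inc V E₂ = numComponents inc V E₁) {u v : α} (hu : u ∈ V) (hv : v ∈ V)
    (huv : Conn inc E₂ u v) : Conn inc E₁ u v := by
  classical
  set comp₁ : α → Finset α := fun w => V.filter fun x => Conn inc E₁ x w
  set comp₂ : α → Finset α := fun w => V.filter fun x => Conn inc E₂ x w
  set saturate : Finset α → Finset α := fun X => V.filter fun x => ∃ w ∈ X, Conn inc E₂ x w
  have hsaturate : ∀ w ∈ V, saturate (comp₁ w) = comp₂ w := fun w hw => by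
    ext x
    simp only [saturate, comp₁, comp₂, mem_filter]
    exact ⟨fun ⟨hx, _, ⟨_, hyw⟩, hxy⟩ => ⟨hx, hxy.trans (conn_mono hE hyw)⟩,
      fun ⟨hx, hxw⟩ => ⟨hx, w, ⟨hw, Relation.ReflTransGen.refl⟩, hxw⟩⟩
  have hinj : Set.InjOn saturate (V.image comp₁) := by
    refine card_image_iff.mp ?_
    rw [image_image, image_congr (f := saturate ∘ comp₁) (g := comp₂) fun w hw => hsaturate w hw]
    exact hk
  have hcomp₂ : comp₂ u = comp₂ v := by
    ext x
    simp only [comp₂, mem_filter]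
    exact and_congr_right fun _ => ⟨fun h => h.trans huv, fun h => h.trans (conn_symm huv)⟩
  have hcomp₁ : comp₁ u = comp₁ v :=
    hinj (mem_image_of_mem comp₁ hu) (mem_image_of_mem comp₁ hv)
      (by rw [hsaturate u hu, hsaturate v hv, hcomp₂])
  have hv' : v ∈ comp₁ u := hcomp₁ ▸ mem_filter.mpr ⟨hv, Relation.ReflTransGen.refl⟩
  exact conn_symm (mem_filter.mp hv').2

lemma conn_insert_iff [DecidableEq ι] {A : Finset ι} {e : ι}
    (he : ∀ u ∈ inc e, ∀ v ∈ inc e, Conn inc A u v) {x y : α} :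
    Conn inc (insert e A) x y ↔ Conn inc A x y := by
  refine ⟨fun hxy => ?_, conn_mono (subset_insert e A)⟩
  induction hxy with
  | refl => exact Relation.ReflTransGen.refl
  | tail _ hstep ih =>
    obtain ⟨i, hi, hb, hc⟩ := hstep
    rcases mem_insert.mp hi with rfl | hiA
    · exact ih.trans (he _ hb _ hc)
    · exact ih.tail ⟨i, hiA, hb, hc⟩

lemma numComponents_insert_eq [DecidableEq ι] (V : Finset α) {A : Finset ι} {e : ι}
    (he : ∀ u ∈ inc e, ∀ v ∈ inc e, Conn inc A u v) :
    numComponents inc V A = numComponents inc V (insert e A) := by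
  simp only [numComponents, conn_insert_iff he]

/-- A δ-cycle is its own δ-cyclic witness, by minimality. -/
lemma IsDeltaCycle.numComponents_erase [DecidableEq ι] {V : Finset α} {E : Finset ι}
    (hC : IsDeltaCycle inc V E) : ∀ i ∈ E, numComponents inc V E = numComponents inc V (E.erase i) := by
  obtain ⟨⟨V', E', hsub, hne, hdel⟩, hmin⟩ := hC
  by_cases hVE : (V', E') = (V, E)
  · obtain ⟨rfl, rfl⟩ := Prod.mk.inj hVE
    exact fun i hi => by convert hdel i hi
  · exact absurd ⟨V', E', ⟨subset_rfl, subset_rfl, hsub.2.2⟩, hne, hdel⟩ (hmin V' E' hsub hVE)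

variable [LinearOrder ι]

lemma Closes.numComponents_insert {G : IdxHypergraph α ι} {B : Finset ι} {e : ι}
    (hc : G.Closes B e) {A : Finset ι} (hBA : B ⊆ A) :
    numComponents G.inc G.verts A = numComponents G.inc G.verts (insert e A) := by
  obtain ⟨V_C, hsub, hcyc⟩ := hc
  have he : e ∈ insert e B := mem_insert_self e B
  refine numComponents_insert_eq G.verts fun u hu v hv => ?_
  have huv : Conn G.inc (insert e B) u v := Relation.ReflTransGen.single ⟨e, he, hu, hv⟩
  refine conn_mono ((erase_insert_subset e B).trans hBA) ?_
  exact conn_of_numComponents_eq (erase_subset e _) (hcyc.numComponents_erase e he)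
    (hsub.2.2 e he hu) (hsub.2.2 e he hv) huv

lemma IsBrokenCycle.exists_closes {G : IdxHypergraph α ι} {B : Finset ι} (hB : G.IsBrokenCycle B) :
    ∃ e ∈ G.edges, G.Closes B e ∧ ∀ b ∈ B, b < e := by
  obtain ⟨V_C, E_C, e, hsub, hcyc, he, hmax, rfl⟩ := hB
  have hins : insert e (E_C.erase e) = E_C := insert_erase he
  refine ⟨e, hsub.2.1 he, ⟨V_C, by rwa [hins], by rwa [hins]⟩, fun b hb => ?_⟩
  exact lt_of_le_of_ne (hmax b (mem_of_mem_erase hb)) (ne_of_mem_erase hb)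

lemma exists_closes_notMem_of_isBrokenCycle {G : IdxHypergraph α ι} {D : Finset (Finset ι)}
    (hD : ∀ B ∈ D, G.IsBrokenCycle B) (hne : D.Nonempty) :
    ∃ B ∈ D, ∃ e ∈ G.edges, G.Closes B e ∧ ∀ B' ∈ D, e ∉ B' := by
  set closers := G.edges.filter fun e => ∃ B ∈ D, G.Closes B e
  obtain ⟨B₀, hB₀⟩ := hne
  obtain ⟨e₀, he₀, hc₀, -⟩ := (hD B₀ hB₀).exists_closes
  obtain ⟨e, he, hmax⟩ := closers.exists_max_image id ⟨e₀, mem_filter.mpr ⟨he₀, B₀, hB₀, hc₀⟩⟩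
  obtain ⟨heE, B, hB, hc⟩ := mem_filter.mp he
  refine ⟨B, hB, e, heE, hc, fun B' hB' heB' => ?_⟩
  obtain ⟨e', he', hc', hlt⟩ := (hD B' hB').exists_closes
  exact (hmax e' (mem_filter.mpr ⟨he', B', hB', hc'⟩)).not_gt (hlt e heB')

end IdxHypergraph

open IdxHypergraph in
/-- Generalized Broken-cycle Theorem: for any subset `D` of the broken cycles of `G`
and any function `f` into an abelian group satisfying the cancellation condition,
`Σ_{A ⊆ E} f(G, A) = Σ_{A ⊆ E, no B ∈ D with B ⊆ A} f(G, A)`. -/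
theorem sum_eq_sum_brokenCycleFree {α ι : Type*} [LinearOrder ι] {M : Type*}
    [AddCommGroup M] (G : IdxHypergraph α ι)
    (D : Finset (Finset ι)) (hD : ∀ B ∈ D, G.IsBrokenCycle B)
    (f : Finset ι → M)
    (hf : ∀ A ⊆ G.edges, ∀ e ∈ G.edges, e ∉ A →
      numComponents G.inc G.verts A = numComponents G.inc G.verts (insert e A) →
      f A = - f (insert e A)) :
    ∑ A ∈ G.edges.powerset, f A
      = ∑ A ∈ G.edges.powerset.filter fun A => ∀ B ∈ D, ¬ B ⊆ A, f A := by
  refine Finset.sum_powerset_eq_sum_filter_forall_not_subset D fun D' hD' hne => ?_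
  obtain ⟨B, hB, e, he, hc, heD'⟩ :=
    exists_closes_notMem_of_isBrokenCycle (fun B hB => hD B (hD' hB)) hne
  exact ⟨B, hB, e, he, heD', fun A hA hBA heA => hf A hA e he heA (hc.numComponents_insert hBA)⟩
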